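/- Let d ≥ 2 and define ψ(ξ') = 1 − √(1 − |ξ'|²) for ξ' ∈ ℝ^{d−1} with |ξ'| < 1, and a_δ(τ, ξ') = δ / (τ²(τ + 2ψ(ξ') − 2)² + δ²). Then for every n ∈ ℕ there exists a constant C_n > 0 such that for all δ ∈ (0,1], all τ ∈ ℝ with |τ| ≤ 1/4, and all ξ' ∈ ℝ^{d−1} with |ξ'| ≤ 1/10, the n-th order total derivative in ξ' satisfies ‖D^n_{ξ'} a_δ(τ, ξ')‖ ≤ C_n · δ / (τ²(τ + 2ψ(ξ') − 2)² + δ²). -/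

import Mathlib

/-! Write `a_δ = δ / g` with `g(ξ') = τ²(τ + 2ψ(ξ') − 2)² + δ²`. On the given range
`(τ + 2ψ − 2)² ≥ 1`, so `g ≥ τ²`; on the other hand every derivative of `g` of positive order
is `τ²` times a derivative of `(τ + 2ψ − 2)²`, which is bounded uniformly by compactness.
Hence `‖Dⁱ g‖ ≤ K g` for `1 ≤ i ≤ n`, and Faà di Bruno's formula bounds every term of
`Dⁿ (δ / g)` by a multiple of `δ / g`. -/

open Real
open scoped ENNReal

noncomputable section

/-- `ψ(ξ') = 1 − √(1 − |ξ'|²)` on `ℝ^{d−1}`. -/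
def psiFn (m : ℕ) (w : EuclideanSpace ℝ (Fin m)) : ℝ := 1 - Real.sqrt (1 - ‖w‖ ^ 2)

/-- `a_δ(τ, ξ') = δ / (τ²(τ + 2ψ(ξ') − 2)² + δ²)`. -/
def aDelta (m : ℕ) (δ τ : ℝ) (w : EuclideanSpace ℝ (Fin m)) : ℝ :=
  δ / (τ ^ 2 * (τ + 2 * psiFn m w - 2) ^ 2 + δ ^ 2)

open Filter Topology
open scoped Nat

section Bounds

variable {𝕜 : Type*} [NontriviallyNormedField 𝕜]
  {E F G : Type*} [NormedAddCommGroup E] [NormedSpace 𝕜 E] [NormedAddCommGroup F]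
  [NormedSpace 𝕜 F] [NormedAddCommGroup G] [NormedSpace 𝕜 G]

theorem ContDiffAt.exists_isOpen_contDiffOn {f : E → F} {x : E} {n : ℕ}
    (hf : ContDiffAt 𝕜 n f x) {u : Set E} (hu : u ∈ 𝓝 x) :
    ∃ s ⊆ u, IsOpen s ∧ x ∈ s ∧ ContDiffOn 𝕜 n f s := by
  obtain ⟨v, hv, hfv⟩ := hf.contDiffOn le_rfl (by simp)
  obtain ⟨s, hs, hso, hxs⟩ := mem_nhds_iff.mp (inter_mem hu hv)
  exact ⟨s, hs.trans Set.inter_subset_left, hso, hxs, hfv.mono (hs.trans Set.inter_subset_right)⟩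

theorem norm_iteratedFDeriv_comp_le_of_contDiffAt {g : F → G} {f : E → F} {x : E} {n : ℕ}
    (hg : ContDiffAt 𝕜 n g (f x)) (hf : ContDiffAt 𝕜 n f x) {C D : ℝ}
    (hC : ∀ i ≤ n, ‖iteratedFDeriv 𝕜 i g (f x)‖ ≤ C)
    (hD : ∀ i, 1 ≤ i → i ≤ n → ‖iteratedFDeriv 𝕜 i f x‖ ≤ D ^ i) :
    ‖iteratedFDeriv 𝕜 n (g ∘ f) x‖ ≤ n ! * C * D ^ n := by
  obtain ⟨t, -, ht, hxt, hgt⟩ := hg.exists_isOpen_contDiffOn Filter.univ_mem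
  obtain ⟨s, hst, hs, hxs, hfs⟩ :=
    hf.exists_isOpen_contDiffOn (hf.continuousAt.preimage_mem_nhds (ht.mem_nhds hxt))
  rw [← iteratedFDerivWithin_of_isOpen n hs hxs]
  refine norm_iteratedFDerivWithin_comp_le hgt hfs le_rfl ht.uniqueDiffOn hs.uniqueDiffOn hst hxs
    (fun i hi => ?_) (fun i hi₁ hi => ?_)
  · rw [iteratedFDerivWithin_of_isOpen i ht hxt]
    exact hC i hi
  · rw [iteratedFDerivWithin_of_isOpen i hs hxs]
    exact hD i hi₁ hi

theorem IsCompact.exists_bound_norm_iteratedFDeriv {K : Set E} (hK : IsCompact K) {f : E → F}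
    {n : ℕ} (hf : ∀ x ∈ K, ContDiffAt 𝕜 n f x) :
    ∃ M, 0 ≤ M ∧ ∀ i ≤ n, ∀ x ∈ K, ‖iteratedFDeriv 𝕜 i f x‖ ≤ M := by
  have hbound : ∀ i, ∃ M, i ≤ n → ∀ x ∈ K, ‖iteratedFDeriv 𝕜 i f x‖ ≤ M := fun i => by
    by_cases hi : i ≤ n
    · obtain ⟨M, hM⟩ := hK.exists_bound_of_continuousOn fun x hx =>
        ((hf x hx).continuousAt_iteratedFDeriv (by exact_mod_cast hi)).continuousWithinAt
      exact ⟨M, fun _ => hM⟩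
    · exact ⟨0, fun h => absurd h hi⟩
  choose M hM using hbound
  refine ⟨∑ i ∈ Finset.range (n + 1), |M i|, by positivity, fun i hi x hx => ?_⟩
  calc ‖iteratedFDeriv 𝕜 i f x‖ ≤ |M i| := (hM i hi x hx).trans (le_abs_self _)
    _ ≤ ∑ j ∈ Finset.range (n + 1), |M j| :=
      Finset.single_le_sum (fun j _ => abs_nonneg (M j)) (Finset.mem_range.2 (by omega))

end Bounds

section RealValued

variable {E : Type*} [NormedAddCommGroup E] [NormedSpace ℝ E]

theorem norm_iteratedFDeriv_inv_one (i : ℕ) : ‖iteratedFDeriv ℝ i Inv.inv (1 : ℝ)‖ = i ! := by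
  rw [norm_iteratedFDeriv_eq_norm_iteratedDeriv, iteratedDeriv_eq_iterate, iter_deriv_inv]
  simp

/-- Rescaling `f` by `f x` reduces this to Faà di Bruno's bound for `t ↦ t⁻¹` at `t = 1`. -/
theorem norm_iteratedFDeriv_div_le {f : E → ℝ} {x : E} {n : ℕ} (hf : ContDiffAt ℝ n f x)
    (hfx : 0 < f x) {K : ℝ} (hK : 1 ≤ K)
    (hD : ∀ i, 1 ≤ i → i ≤ n → ‖iteratedFDeriv ℝ i f x‖ ≤ K * f x) (c : ℝ) :
    ‖iteratedFDeriv ℝ n (fun y => c / f y) x‖ ≤ (n !) ^ 2 * K ^ n * (|c| / f x) := by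
  set a := f x
  set h : E → ℝ := a⁻¹ • f
  have hh : ContDiffAt ℝ n h x := hf.const_smul a⁻¹
  have hhx : h x = 1 := inv_mul_cancel₀ hfx.ne'
  have hrescale : (fun y => c / f y) = (c / a) • (Inv.inv ∘ h) := by
    funext y
    simp only [h, Pi.smul_apply, Function.comp_apply, smul_eq_mul, mul_inv, inv_inv]
    field_simp
  have hinv : ContDiffAt ℝ n Inv.inv (h x) := contDiffAt_inv ℝ (by rw [hhx]; exact one_ne_zero)
  have hcomp : ‖iteratedFDeriv ℝ n (Inv.inv ∘ h) x‖ ≤ n ! * n ! * K ^ n := by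
    refine norm_iteratedFDeriv_comp_le_of_contDiffAt hinv hh (fun i hi => ?_) fun i hi₁ hi => ?_
    · rw [hhx, norm_iteratedFDeriv_inv_one]
      exact_mod_cast Nat.factorial_le hi
    · rw [iteratedFDeriv_const_smul_apply (hf.of_le (by exact_mod_cast hi)), norm_smul,
        norm_inv, Real.norm_of_nonneg hfx.le]
      calc a⁻¹ * ‖iteratedFDeriv ℝ i f x‖ ≤ a⁻¹ * (K * a) := by gcongr; exact hD i hi₁ hi
        _ = K := by field_simp
        _ ≤ K ^ i := le_self_pow₀ hK (by omega)
  rw [hrescale, iteratedFDeriv_const_smul_apply (hinv.comp x hh), norm_smul, Real.norm_eq_abs,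
    abs_div, abs_of_pos hfx]
  calc |c| / a * ‖iteratedFDeriv ℝ n (Inv.inv ∘ h) x‖ ≤ |c| / a * (n ! * n ! * K ^ n) := by
        gcongr
    _ = _ := by ring

theorem norm_iteratedFDeriv_mul_add_sq_le {f : E → ℝ} {x : E} {i : ℕ} (hi : i ≠ 0)
    (hf : ContDiffAt ℝ i f x) (a b c : ℝ) :
    ‖iteratedFDeriv ℝ i (fun y => a * (f y + c) ^ 2 + b) x‖ ≤
      |a| * (2 * |c| * ‖iteratedFDeriv ℝ i f x‖ + ‖iteratedFDeriv ℝ i (fun y => f y ^ 2) x‖) := by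
  have hexpand : (fun y => a * (f y + c) ^ 2 + b) =
      (fun y => (2 * a * c) • f y + a • f y ^ 2) + fun _ => a * c ^ 2 + b := by
    funext y
    simp only [Pi.add_apply, smul_eq_mul]
    ring
  have hsq : ContDiffAt ℝ i (fun y => f y ^ 2) x := hf.pow 2
  rw [hexpand, iteratedFDeriv_add_apply ((hf.const_smul _).add (hsq.const_smul _))
      contDiffAt_const, iteratedFDeriv_const_of_ne hi, Pi.zero_apply, add_zero,
    fun_iteratedFDeriv_add_apply (hf.const_smul _) (hsq.const_smul _),
    iteratedFDeriv_const_smul_apply' hf, iteratedFDeriv_const_smul_apply' hsq]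
  refine (norm_add_le _ _).trans ?_
  rw [norm_smul, norm_smul, Real.norm_eq_abs, Real.norm_eq_abs, abs_mul, abs_mul, abs_two]
  linarith

end RealValued

theorem psiFn_contDiffAt {m : ℕ} {w : EuclideanSpace ℝ (Fin m)} (hw : ‖w‖ < 1)
    {n : WithTop ℕ∞} : ContDiffAt ℝ n (psiFn m) w := by
  have hpos : 1 - ‖w‖ ^ 2 ≠ 0 := by nlinarith [norm_nonneg w]
  exact contDiffAt_const.sub ((contDiffAt_const.sub (contDiff_norm_sq ℝ).contDiffAt).sqrt hpos)

def aDenom (m : ℕ) (δ τ : ℝ) (w : EuclideanSpace ℝ (Fin m)) : ℝ :=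
  τ ^ 2 * (τ + 2 * psiFn m w - 2) ^ 2 + δ ^ 2

theorem aDenom_contDiffAt {m : ℕ} {δ τ : ℝ} {w : EuclideanSpace ℝ (Fin m)} (hw : ‖w‖ < 1)
    {n : WithTop ℕ∞} : ContDiffAt ℝ n (aDenom m δ τ) w := by
  have := psiFn_contDiffAt (n := n) hw
  unfold aDenom
  fun_prop

theorem sq_le_aDenom {m : ℕ} {δ τ : ℝ} {w : EuclideanSpace ℝ (Fin m)} (hτ : |τ| ≤ 1 / 4)
    (hw : ‖w‖ ≤ 1 / 10) : τ ^ 2 ≤ aDenom m δ τ w := by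
  have hsqrt : 9 / 10 ≤ √(1 - ‖w‖ ^ 2) :=
    Real.le_sqrt_of_sq_le (by nlinarith [norm_nonneg w])
  have hneg : τ + 2 * psiFn m w - 2 ≤ -1 := by
    rw [psiFn]
    linarith [(abs_le.mp hτ).2]
  have hsq : 1 ≤ (τ + 2 * psiFn m w - 2) ^ 2 := by nlinarith
  rw [aDenom]
  nlinarith [sq_nonneg δ, sq_nonneg τ]

theorem exists_norm_iteratedFDeriv_aDenom_le (m n : ℕ) :
    ∃ K, 1 ≤ K ∧ ∀ δ τ : ℝ, |τ| ≤ 1 / 4 → ∀ w : EuclideanSpace ℝ (Fin m), ‖w‖ ≤ 1 / 10 →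
      ∀ i, 1 ≤ i → i ≤ n → ‖iteratedFDeriv ℝ i (aDenom m δ τ) w‖ ≤ K * aDenom m δ τ w := by
  set f := fun v => 2 * psiFn m v
  have hf : ∀ w ∈ Metric.closedBall (0 : EuclideanSpace ℝ (Fin m)) (1 / 10),
      ContDiffAt ℝ n f w := fun w hw =>
    (psiFn_contDiffAt ((mem_closedBall_zero_iff.mp hw).trans_lt (by norm_num))).const_smul (2 : ℝ)
  obtain ⟨M₁, hM₁, hfM₁⟩ := (isCompact_closedBall _ _).exists_bound_norm_iteratedFDeriv hf
  obtain ⟨M₂, hM₂, hfM₂⟩ := (isCompact_closedBall _ _).exists_bound_norm_iteratedFDeriv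
    fun w hw => (hf w hw).pow 2
  refine ⟨1 + 6 * M₁ + M₂, by linarith, fun δ τ hτ w hw i hi₁ hi => ?_⟩
  have hwB := mem_closedBall_zero_iff.mpr hw
  have hτ2 : |τ - 2| ≤ 3 := by rw [abs_le] at hτ ⊢; constructor <;> linarith
  have hexpand : aDenom m δ τ = fun v => τ ^ 2 * (f v + (τ - 2)) ^ 2 + δ ^ 2 := by
    funext v
    simp only [aDenom, f]
    ring
  calc ‖iteratedFDeriv ℝ i (aDenom m δ τ) w‖ ≤ |τ ^ 2| * (2 * |τ - 2| * M₁ + M₂) := by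
        rw [hexpand]
        refine (norm_iteratedFDeriv_mul_add_sq_le (by omega)
          ((hf w hwB).of_le (by exact_mod_cast hi)) _ _ _).trans ?_
        gcongr
        exacts [hfM₁ i hi w hwB, hfM₂ i hi w hwB]
    _ ≤ τ ^ 2 * (1 + 6 * M₁ + M₂) := by rw [abs_sq]; gcongr; nlinarith
    _ ≤ (1 + 6 * M₁ + M₂) * aDenom m δ τ w := by
        rw [mul_comm]
        gcongr
        exact sq_le_aDenom hτ hw

theorem aDelta_deriv_bounds_general (d : ℕ) (n : ℕ) :
    ∃ C : ℝ, 0 < C ∧ ∀ δ : ℝ, δ ∈ Set.Ioc (0 : ℝ) 1 → ∀ τ : ℝ, |τ| ≤ 1 / 4 →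
      ∀ w : EuclideanSpace ℝ (Fin (d - 1)), ‖w‖ ≤ 1 / 10 →
        ‖iteratedFDeriv ℝ n (aDelta (d - 1) δ τ) w‖ ≤
          C * (δ / (τ ^ 2 * (τ + 2 * psiFn (d - 1) w - 2) ^ 2 + δ ^ 2)) := by
  obtain ⟨K, hK, hD⟩ := exists_norm_iteratedFDeriv_aDenom_le (d - 1) n
  refine ⟨(n !) ^ 2 * K ^ n, by positivity, fun δ ⟨hδ, _⟩ τ hτ w hw => ?_⟩
  have hpos : 0 < aDenom (d - 1) δ τ w := by rw [aDenom]; positivity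
  have hbound := norm_iteratedFDeriv_div_le (aDenom_contDiffAt (by linarith)) hpos hK
    (hD δ τ hτ w hw) δ
  rwa [abs_of_pos hδ] at hbound

/-- **Lemma 3.2, bounds for `a_δ`.** Let `d ≥ 2`. For every `n` there
is `C_n > 0` such that for all `δ ∈ (0,1]`, `|τ| ≤ 1/4` and `|ξ'| ≤ 1/10`,
`‖D^n_{ξ'} a_δ(τ, ξ')‖ ≤ C_n · δ / (τ²(τ + 2ψ(ξ') − 2)² + δ²)`. -/
theorem aDelta_deriv_bounds (d : ℕ) (hd : 2 ≤ d) (n : ℕ) :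
    ∃ C : ℝ, 0 < C ∧ ∀ δ : ℝ, δ ∈ Set.Ioc (0 : ℝ) 1 → ∀ τ : ℝ, |τ| ≤ 1 / 4 →
      ∀ w : EuclideanSpace ℝ (Fin (d - 1)), ‖w‖ ≤ 1 / 10 →
        ‖iteratedFDeriv ℝ n (aDelta (d - 1) δ τ) w‖ ≤
          C * (δ / (τ ^ 2 * (τ + 2 * psiFn (d - 1) w - 2) ^ 2 + δ ^ 2)) :=
  aDelta_deriv_bounds_general d n

end
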